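/- For any composition α = (α_1,...,α_ℓ) of nonnegative integers, e_α(∂X) Δ_L(X;Y) = Σ_{T ∈ CT_α} ε'(T, L) Δ_{∂T(L)}(X;Y), where the sum is over ℓ-tuples T = (T_1,...,T_ℓ) of strictly increasing columns with T_j having α_j entries from {1,...,n}; ∂T(L) replaces each cell (p_i,q_i) of L by (p_i − |T^{-1}(i)|, q_i); and ε'(T,L) = ε(∂T_1···∂T_ℓ(L)) · ε(∂T_2···∂T_ℓ(L)) ··· ε(∂T_ℓ(L)), where ε(M) = 1 if M has n distinct cells in the positive quadrant and 0 otherwise. -/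

import Mathlib

/-!
Each row of the matrix defining `Δ_M` involves a single variable `x_i`, so a monomial
`∏_{i ∈ S} x_i` of `e_k` acts on `Δ_M` by differentiating the rows indexed by `S`. Summed over
all `k`-subsets `S`, the permutation expansion lets one trade the `k` differentiated rows for
`k` differentiated columns, and differentiating column `j` lowers the cell `M j` by one (entries
of cells outside the quadrant being `0`). Hence `e_k(∂X) Δ_M = Σ_C Δ_{∂C(M)}` over `k`-subsets
`C`, i.e. over strictly increasing columns. As `e_α(∂X)` is the composite of the `e_{α_j}(∂X)`,
induction on `ℓ` gives the theorem; the factors `ε` are harmless since `Δ_M = 0` when `ε(M) = 0`.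
-/

open MvPolynomial

noncomputable def Delta (n : ℕ) (L : Fin n → ℕ × ℕ) : MvPolynomial (Fin n ⊕ Fin n) ℚ :=
  Matrix.det (Matrix.of fun i j : Fin n =>
    C ((((L j).1.factorial : ℚ) * ((L j).2.factorial : ℚ))⁻¹) *
      X (Sum.inl i) ^ (L j).1 * X (Sum.inr i) ^ (L j).2)

noncomputable def DeltaZ (n : ℕ) (L : Fin n → ℤ × ℤ) : MvPolynomial (Fin n ⊕ Fin n) ℚ :=
  if ∀ i, 0 ≤ (L i).1 ∧ 0 ≤ (L i).2 then
    Delta n fun i => ((L i).1.toNat, (L i).2.toNat)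
  else 0

noncomputable def diffOp {σ : Type} (f P : MvPolynomial σ ℚ) : MvPolynomial σ ℚ :=
  ∑ d ∈ f.support, ∑ e ∈ P.support,
    monomial (e - d) (f.coeff d * P.coeff e *
      ∏ i ∈ d.support, (Nat.descFactorial (e i) (d i) : ℚ))

def eps (n : ℕ) (L : Fin n → ℤ × ℤ) : ℚ :=
  if Function.Injective L ∧ ∀ i, 0 ≤ (L i).1 ∧ 0 ≤ (L i).2 then 1 else 0

def tailCount (n : ℕ) {ℓ : ℕ} (α : Fin ℓ → ℕ) (T : ∀ j, Fin (α j) → Fin n) (k : ℕ)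
    (i : Fin n) : ℕ :=
  ∑ j : Fin ℓ, if k ≤ (j : ℕ) then (Finset.univ.filter fun r => T j r = i).card else 0

def applyTail (n : ℕ) {ℓ : ℕ} (α : Fin ℓ → ℕ) (T : ∀ j, Fin (α j) → Fin n) (k : ℕ)
    (L : Fin n → ℤ × ℤ) : Fin n → ℤ × ℤ :=
  fun i => ((L i).1 - tailCount n α T k i, (L i).2)

def epsTuple (n : ℕ) {ℓ : ℕ} (α : Fin ℓ → ℕ) (T : ∀ j, Fin (α j) → Fin n)
    (L : Fin n → ℤ × ℤ) : ℚ :=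
  ∏ k : Fin ℓ, eps n (applyTail n α T k L)

noncomputable def eInt (n : ℕ) (k : ℤ) : MvPolynomial (Fin n) ℚ :=
  if 0 ≤ k then esymm (Fin n) ℚ k.toNat else 0

noncomputable def schurDual (n ℓ : ℕ) (lam' : Fin ℓ → ℕ) : MvPolynomial (Fin n) ℚ :=
  Matrix.det (Matrix.of fun i j : Fin ℓ => eInt n ((lam' j : ℤ) + (i : ℕ) - (j : ℕ)))

def IsCSYT (n : ℕ) {ℓ : ℕ} (α : Fin ℓ → ℕ) (T : ∀ j, Fin (α j) → Fin n) : Prop :=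
  (∀ j, StrictMono (T j)) ∧
  ∀ j j' : Fin ℓ, (j' : ℕ) = (j : ℕ) + 1 →
    ∀ (i : Fin (α j)) (i' : Fin (α j')), (i : ℕ) = (i' : ℕ) → T j i ≤ T j' i'

open Finset

section DiffOp

variable {σ : Type}

theorem diffOp_eq_sum (f P : MvPolynomial σ ℚ) :
    diffOp f P = (AddMonoidAlgebra.coeff f).sum fun d a => (AddMonoidAlgebra.coeff P).sum
      fun e b => monomial (e - d) (a * b * ∏ i ∈ d.support, ((e i).descFactorial (d i) : ℚ)) :=
  rfl

theorem diffOp_add_left (f g P : MvPolynomial σ ℚ) :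
    diffOp (f + g) P = diffOp f P + diffOp g P := by
  simp only [diffOp_eq_sum, AddMonoidAlgebra.coeff_add]
  exact Finsupp.sum_add_index' (by simp) fun d a b => by
    simp only [add_mul, map_add, Finsupp.sum_add]

theorem diffOp_add_right (f P Q : MvPolynomial σ ℚ) :
    diffOp f (P + Q) = diffOp f P + diffOp f Q := by
  simp only [diffOp_eq_sum, AddMonoidAlgebra.coeff_add, ← Finsupp.sum_add]
  refine Finsupp.sum_congr fun d _ => Finsupp.sum_add_index' (by simp) fun e a b => ?_
  simp only [mul_add, add_mul, map_add]

theorem diffOp_smul_right (f P : MvPolynomial σ ℚ) (c : ℚ) :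
    diffOp f (c • P) = c • diffOp f P := by
  simp only [diffOp_eq_sum, AddMonoidAlgebra.coeff_smul, Finsupp.smul_sum]
  refine Finsupp.sum_congr fun d _ => ?_
  rw [Finsupp.sum_smul_index' (by simp)]
  refine Finsupp.sum_congr fun e _ => ?_
  rw [smul_monomial, smul_eq_mul]
  ring_nf

theorem diffOp_sum_left {ι : Type} (s : Finset ι) (f : ι → MvPolynomial σ ℚ)
    (P : MvPolynomial σ ℚ) : diffOp (∑ a ∈ s, f a) P = ∑ a ∈ s, diffOp (f a) P :=
  map_sum (AddMonoidHom.mk' (diffOp · P) fun f g => diffOp_add_left f g P) f s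

theorem diffOp_sum_right {ι : Type} (f : MvPolynomial σ ℚ) (s : Finset ι)
    (P : ι → MvPolynomial σ ℚ) : diffOp f (∑ a ∈ s, P a) = ∑ a ∈ s, diffOp f (P a) :=
  map_sum (AddMonoidHom.mk' (diffOp f) (diffOp_add_right f)) P s

theorem diffOp_monomial_monomial (d e : σ →₀ ℕ) (c b : ℚ) :
    diffOp (monomial d c) (monomial e b) =
      monomial (e - d) (c * b * ∏ i ∈ d.support, ((e i).descFactorial (d i) : ℚ)) := by
  rw [diffOp_eq_sum, sum_monomial_eq (by simp), sum_monomial_eq (by simp)]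

theorem prod_descFactorial_add [DecidableEq σ] (d₁ d₂ e : σ →₀ ℕ) :
    ∏ i ∈ (d₁ + d₂).support, ((e i).descFactorial ((d₁ + d₂) i) : ℚ) =
      (∏ i ∈ d₂.support, ((e i).descFactorial (d₂ i) : ℚ)) *
        ∏ i ∈ d₁.support, (((e - d₂) i).descFactorial (d₁ i) : ℚ) := by
  have extend : ∀ (d m : σ →₀ ℕ), d.support ⊆ d₁.support ∪ d₂.support →
      ∏ i ∈ d.support, ((m i).descFactorial (d i) : ℚ) =
        ∏ i ∈ d₁.support ∪ d₂.support, ((m i).descFactorial (d i) : ℚ) := fun d m hd =>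
    prod_subset hd fun i _ hi => by simp [Finsupp.notMem_support_iff.mp hi]
  rw [extend _ _ Finsupp.support_add, extend _ _ subset_union_right,
    extend _ _ subset_union_left, ← prod_mul_distrib]
  refine prod_congr rfl fun i _ => ?_
  rw [Finsupp.add_apply, Finsupp.tsub_apply, mul_comm, ← Nat.cast_mul,
    ← Nat.descFactorial_mul_descFactorial (Nat.le_add_left (d₂ i) (d₁ i)), Nat.add_sub_cancel]

theorem diffOp_mul (f g P : MvPolynomial σ ℚ) :
    diffOp (f * g) P = diffOp f (diffOp g P) := by
  classical
  induction f using MvPolynomial.induction_on' with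
  | monomial d₁ c₁ =>
    induction g using MvPolynomial.induction_on' with
    | monomial d₂ c₂ =>
      induction P using MvPolynomial.induction_on' with
      | monomial e b =>
        rw [monomial_mul, diffOp_monomial_monomial, diffOp_monomial_monomial,
          diffOp_monomial_monomial, prod_descFactorial_add, tsub_tsub, add_comm d₂]
        ring_nf
      | add P Q hP hQ => rw [diffOp_add_right, diffOp_add_right, diffOp_add_right, hP, hQ]
    | add g h hg hh => rw [mul_add, diffOp_add_left, diffOp_add_left, diffOp_add_right, hg, hh]
  | add f g hf hg => rw [add_mul, diffOp_add_left, diffOp_add_left, hf, hg]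

theorem diffOp_one (P : MvPolynomial σ ℚ) : diffOp 1 P = P := by
  induction P using MvPolynomial.induction_on' with
  | monomial e b => simp [← C_1, ← monomial_zero', diffOp_monomial_monomial]
  | add P Q hP hQ => rw [diffOp_add_right, hP, hQ]

theorem diffOp_X (v : σ) (P : MvPolynomial σ ℚ) : diffOp (X v) P = pderiv v P := by
  induction P using MvPolynomial.induction_on' with
  | monomial e b => simp [X, diffOp_monomial_monomial, pderiv_monomial, mul_comm]
  | add P Q hP hQ => rw [diffOp_add_right, hP, hQ, map_add]

end DiffOp

theorem Derivation.map_prod_eq_zero {R A ι : Type*} [CommSemiring R] [CommSemiring A]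
    [Algebra R A] (D : Derivation R A A) (s : Finset ι) (f : ι → A)
    (hf : ∀ i ∈ s, D (f i) = 0) : D (∏ i ∈ s, f i) = 0 :=
  prod_induction f (fun a => D a = 0) (fun a b ha hb => by simp [ha, hb]) D.map_one_eq_zero hf

theorem Derivation.map_det {R A ι : Type*} [CommRing R] [CommRing A] [Algebra R A]
    [Fintype ι] [DecidableEq ι] (D : Derivation R A A) (M : Matrix ι ι A) (r : ι)
    (hM : ∀ i j, i ≠ r → D (M i j) = 0) :
    D M.det = (M.updateRow r fun j => D (M r j)).det := by
  rw [← M.det_transpose, ← (M.updateRow r _).det_transpose, Matrix.det_apply,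
    Matrix.det_apply, map_sum]
  refine sum_congr rfl fun τ _ => ?_
  simp only [Units.smul_def, map_zsmul, Matrix.transpose_apply]
  congr 1
  rw [← mul_prod_erase _ _ (mem_univ r), ← mul_prod_erase _ _ (mem_univ r), D.leibniz,
    D.map_prod_eq_zero _ _ fun i hi => hM i _ (ne_of_mem_erase hi), Matrix.updateRow_self,
    smul_zero, zero_add, smul_eq_mul, mul_comm]
  congr 1
  exact prod_congr rfl fun i hi => by rw [Matrix.updateRow_ne (ne_of_mem_erase hi)]

theorem MvPolynomial.pderiv_pderiv_comm {R σ : Type*} [CommRing R] (v w : σ)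
    (p : MvPolynomial σ R) : pderiv v (pderiv w p) = pderiv w (pderiv v p) := by
  have h : ⁅pderiv v, pderiv w⁆ = (0 : Derivation R (MvPolynomial σ R) (MvPolynomial σ R)) :=
    derivation_ext fun i => by
      rw [Derivation.commutator_apply]
      classical simp [pderiv_X, Pi.single_apply, apply_ite]
  have := congr($h p)
  rwa [Derivation.commutator_apply, Derivation.zero_apply, sub_eq_zero] at this

theorem diffOp_prod_X_det {σ ι : Type} [Fintype ι] [DecidableEq ι] (v : ι → σ)
    (A : Matrix ι ι (MvPolynomial σ ℚ)) (hA : ∀ r i j, i ≠ r → pderiv (v r) (A i j) = 0)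
    (S : Finset ι) :
    diffOp (∏ i ∈ S, X (v i)) A.det =
      (Matrix.of fun i j => if i ∈ S then pderiv (v i) (A i j) else A i j).det := by
  induction S using Finset.induction with
  | empty => simp only [prod_empty, diffOp_one, notMem_empty, if_false]; rfl
  | insert r S hr ih =>
    rw [prod_insert hr, diffOp_mul, ih, diffOp_X, Derivation.map_det _ _ r]
    · congr 1
      refine Matrix.ext fun i j => ?_
      rcases eq_or_ne i r with rfl | hir
      · simp [hr]
      · simp [hir]
    · intro i j hir
      simp only [Matrix.of_apply]
      split_ifs
      · rw [pderiv_pderiv_comm, hA r i j hir, map_zero]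
      · exact hA r i j hir

theorem sum_det_ite_row_eq_sum_det_ite_col {R ι : Type*} [CommRing R] [Fintype ι]
    [DecidableEq ι] (f g : Matrix ι ι R) (k : ℕ) :
    ∑ S ∈ powersetCard k univ, (Matrix.of fun i j => if i ∈ S then g i j else f i j).det =
      ∑ C ∈ powersetCard k univ, (Matrix.of fun i j => if j ∈ C then g i j else f i j).det := by
  simp only [Matrix.det_apply', Matrix.of_apply]
  rw [sum_comm, sum_comm (s := powersetCard k _)]
  refine sum_congr rfl fun τ _ => sum_equiv τ.symm.finsetCongr (fun S => ?_) fun S _ => ?_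
  · simp [mem_powersetCard]
  · simp [mem_map_equiv]

theorem sum_powersetCard_eq_sum_strictMono {ι M : Type*} [Fintype ι] [LinearOrder ι]
    [AddCommMonoid M] (k : ℕ) [DecidablePred fun T : Fin k → ι => StrictMono T]
    (f : Finset ι → M) :
    ∑ S ∈ powersetCard k univ, f S =
      ∑ T ∈ univ.filter (fun T : Fin k → ι => StrictMono T), f (univ.image T) := by
  symm
  refine sum_bij (fun T _ => univ.image T) (fun T hT => ?_) (fun T₁ hT₁ T₂ hT₂ h => ?_)
    (fun S hS => ?_) fun _ _ => rfl
  · rw [mem_filter] at hT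
    simp [mem_powersetCard, card_image_of_injective _ hT.2.injective]
  · rw [mem_filter] at hT₁ hT₂
    have hcard : #(univ.image T₁) = k := by simp [card_image_of_injective _ hT₁.2.injective]
    have e₁ := orderEmbOfFin_unique hcard (fun x => mem_image_of_mem T₁ (mem_univ x)) hT₁.2
    have e₂ := orderEmbOfFin_unique hcard (fun x => h ▸ mem_image_of_mem T₂ (mem_univ x)) hT₂.2
    exact e₁.trans e₂.symm
  · rw [mem_powersetCard] at hS
    exact ⟨S.orderEmbOfFin hS.2, mem_filter.mpr ⟨mem_univ _, (S.orderEmbOfFin hS.2).strictMono⟩,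
      coe_injective (by simp)⟩

theorem card_filter_eq_ite_mem_image {α β : Type*} [Fintype α] [DecidableEq β] {T : α → β}
    (hT : Function.Injective T) (b : β) :
    #{a | T a = b} = if b ∈ univ.image T then 1 else 0 := by
  split_ifs with hb
  · obtain ⟨a, -, rfl⟩ := mem_image.mp hb
    exact card_eq_one.mpr ⟨a, by ext; simp [hT.eq_iff]⟩
  · exact card_eq_zero.mpr <| filter_eq_empty_iff.mpr fun a _ h =>
      hb (mem_image.mpr ⟨a, mem_univ _, h⟩)

theorem sum_filter_forall_fin_cons {ℓ : ℕ} {β : Fin (ℓ + 1) → Type*} [∀ j, Fintype (β j)]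
    {M : Type*} [AddCommMonoid M] (p : ∀ j, β j → Prop) [∀ j, DecidablePred (p j)]
    (f : (∀ j, β j) → M) :
    ∑ T ∈ univ.filter (fun T => ∀ j, p j (T j)), f T =
      ∑ T₀ ∈ univ.filter (p 0),
        ∑ T' ∈ univ.filter (fun T' : ∀ j : Fin ℓ, β j.succ => ∀ j, p j.succ (T' j)),
          f (Fin.cons T₀ T') := by
  rw [sum_filter, ← (Fin.consEquiv β).sum_comp, Fintype.sum_prod_type]
  simp [sum_filter, Fin.forall_fin_succ, ite_and, Fin.consEquiv]

section Cells

variable {n : ℕ}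

/-- Zero for cells off the quadrant, so that `∂/∂x_i` lowers the cell with no case split. -/
noncomputable def cellMonomial (i : Fin n) (c : ℤ × ℤ) : MvPolynomial (Fin n ⊕ Fin n) ℚ :=
  if 0 ≤ c.1 ∧ 0 ≤ c.2 then
    C (((c.1.toNat.factorial : ℚ) * (c.2.toNat.factorial : ℚ))⁻¹) *
      X (Sum.inl i) ^ c.1.toNat * X (Sum.inr i) ^ c.2.toNat
  else 0

def lowerCells (M : Fin n → ℤ × ℤ) (c : Fin n → ℕ) : Fin n → ℤ × ℤ :=
  fun i => ((M i).1 - c i, (M i).2)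

theorem DeltaZ_eq_det (M : Fin n → ℤ × ℤ) :
    DeltaZ n M = (Matrix.of fun i j => cellMonomial i (M j)).det := by
  unfold DeltaZ
  split_ifs with hM
  · exact congrArg Matrix.det (Matrix.ext fun i j => by simp [cellMonomial, hM j])
  · push Not at hM
    obtain ⟨j, hj⟩ := hM
    refine (Matrix.det_eq_zero_of_column_eq_zero j fun i => ?_).symm
    simp only [Matrix.of_apply, cellMonomial]
    exact if_neg fun h => (hj h.1).not_ge h.2

theorem eps_smul_DeltaZ (M : Fin n → ℤ × ℤ) : eps n M • DeltaZ n M = DeltaZ n M := by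
  unfold eps
  split_ifs with h
  · exact one_smul _ _
  suffices DeltaZ n M = 0 by rw [this, smul_zero]
  by_cases hM : ∀ i, 0 ≤ (M i).1 ∧ 0 ≤ (M i).2
  · obtain ⟨a, b, hab, hne⟩ := Function.not_injective_iff.mp fun hinj => h ⟨hinj, hM⟩
    rw [DeltaZ_eq_det]
    exact Matrix.det_zero_of_column_eq hne fun i => by simp [hab]
  · exact if_neg hM

theorem pderiv_inl_cellMonomial_of_ne {i r : Fin n} (h : i ≠ r) (c : ℤ × ℤ) :
    pderiv (Sum.inl r) (cellMonomial i c) = 0 := by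
  unfold cellMonomial
  split_ifs
  · simp [pderiv_X, h]
  · exact map_zero _

theorem pderiv_inl_cellMonomial (i : Fin n) (c : ℤ × ℤ) :
    pderiv (Sum.inl i) (cellMonomial i c) = cellMonomial i (c.1 - 1, c.2) := by
  obtain ⟨p, q⟩ := c
  unfold cellMonomial
  by_cases hpq : 0 ≤ p ∧ 0 ≤ q
  swap
  · rw [if_neg hpq, if_neg fun h => hpq ⟨by omega, h.2⟩, map_zero]
  rw [if_pos hpq]
  obtain ⟨a, rfl⟩ : ∃ a : ℕ, p = a := ⟨p.toNat, by omega⟩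
  obtain ⟨b, rfl⟩ : ∃ b : ℕ, q = b := ⟨q.toNat, by omega⟩
  simp only [Int.toNat_natCast]
  cases a with
  | zero =>
    rw [if_neg (by omega)]
    simp [pderiv_X_of_ne Sum.inr_ne_inl]
  | succ a =>
    rw [if_pos (by omega), show ((a + 1 : ℕ) - 1 : ℤ).toNat = a by omega]
    have hc : C ((((a + 1).factorial : ℚ) * (b.factorial : ℚ))⁻¹) *
        ((a + 1 : ℕ) : MvPolynomial (Fin n ⊕ Fin n) ℚ) =
          C (((a.factorial : ℚ) * (b.factorial : ℚ))⁻¹) := by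
      rw [← map_natCast C, ← C_mul, Nat.factorial_succ]
      congr 1
      push_cast
      field_simp
    simp only [Derivation.leibniz, Derivation.leibniz_pow, pderiv_X_self, pderiv_C,
      pderiv_X_of_ne Sum.inr_ne_inl, smul_eq_mul, mul_one, mul_zero, add_zero, nsmul_eq_mul,
      Nat.add_sub_cancel]
    linear_combination (X (Sum.inr i) ^ b * X (Sum.inl i) ^ a) * hc

theorem diffOp_esymm_DeltaZ_eq_sum_powersetCard (k : ℕ) (M : Fin n → ℤ × ℤ) :
    diffOp (rename Sum.inl (esymm (Fin n) ℚ k)) (DeltaZ n M) =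
      ∑ C ∈ powersetCard k univ, DeltaZ n (lowerCells M fun j => if j ∈ C then 1 else 0) := by
  have hrename : rename (Sum.inl (β := Fin n)) (esymm (Fin n) ℚ k) =
      ∑ S ∈ powersetCard k univ, ∏ i ∈ S, X (Sum.inl i) := by
    simp [esymm, map_sum, map_prod]
  rw [hrename, diffOp_sum_left, DeltaZ_eq_det, sum_congr rfl fun S _ =>
    diffOp_prod_X_det Sum.inl (Matrix.of fun i j => cellMonomial i (M j))
      (fun r i j h => pderiv_inl_cellMonomial_of_ne h _) S]
  simp only [Matrix.of_apply, pderiv_inl_cellMonomial]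
  rw [sum_det_ite_row_eq_sum_det_ite_col (fun i j => cellMonomial i (M j))
    (fun i j => cellMonomial i ((M j).1 - 1, (M j).2))]
  refine sum_congr rfl fun C _ => ?_
  rw [DeltaZ_eq_det]
  congr 1
  refine Matrix.ext fun i j => ?_
  by_cases hj : j ∈ C <;> simp [lowerCells, hj]

open scoped Classical in
theorem diffOp_esymm_DeltaZ (k : ℕ) (M : Fin n → ℤ × ℤ) :
    diffOp (rename Sum.inl (esymm (Fin n) ℚ k)) (DeltaZ n M) =
      ∑ T ∈ univ.filter (fun T : Fin k → Fin n => StrictMono T),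
        DeltaZ n (lowerCells M fun i => #{r | T r = i}) := by
  rw [diffOp_esymm_DeltaZ_eq_sum_powersetCard, sum_powersetCard_eq_sum_strictMono]
  refine sum_congr rfl fun T hT => ?_
  simp only [card_filter_eq_ite_mem_image (mem_filter.mp hT).2.injective]

end Cells

section Cons

variable {n ℓ : ℕ} (α : Fin (ℓ + 1) → ℕ) (T₀ : Fin (α 0) → Fin n)
  (T' : ∀ j : Fin ℓ, Fin (α j.succ) → Fin n) (L : Fin n → ℤ × ℤ)

theorem tailCount_cons_succ (k : ℕ) (i : Fin n) :
    tailCount n α (Fin.cons T₀ T') (k + 1) i = tailCount n (fun j => α j.succ) T' k i := by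
  simp [tailCount, Fin.sum_univ_succ]

theorem tailCount_cons_zero (i : Fin n) :
    tailCount n α (Fin.cons T₀ T') 0 i =
      #{r | T₀ r = i} + tailCount n (fun j => α j.succ) T' 0 i := by
  simp [tailCount, Fin.sum_univ_succ]

theorem applyTail_cons_succ (k : ℕ) :
    applyTail n α (Fin.cons T₀ T') (k + 1) L = applyTail n (fun j => α j.succ) T' k L := by
  funext i
  simp only [applyTail, tailCount_cons_succ]

theorem applyTail_cons_zero :
    applyTail n α (Fin.cons T₀ T') 0 L =
      lowerCells (applyTail n (fun j => α j.succ) T' 0 L) fun i => #{r | T₀ r = i} := by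
  funext i
  simp only [applyTail, lowerCells, tailCount_cons_zero]
  push_cast
  ring_nf

theorem epsTuple_cons :
    epsTuple n α (Fin.cons T₀ T') L =
      eps n (applyTail n α (Fin.cons T₀ T') 0 L) * epsTuple n (fun j => α j.succ) T' L := by
  simp only [epsTuple, Fin.prod_univ_succ, Fin.val_zero, Fin.val_succ, applyTail_cons_succ]

end Cons

open Classical in
theorem stmt9_general (n ℓ : ℕ) (α : Fin ℓ → ℕ) (L : Fin n → ℤ × ℤ) :
    diffOp (rename Sum.inl (∏ j : Fin ℓ, esymm (Fin n) ℚ (α j))) (DeltaZ n L) =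
      ∑ T ∈ Finset.univ.filter
          (fun T : ∀ j : Fin ℓ, Fin (α j) → Fin n => ∀ j, StrictMono (T j)),
        epsTuple n α T L • DeltaZ n (applyTail n α T 0 L) := by
  induction ℓ with
  | zero =>
    have hL : ∀ T, applyTail n α T 0 L = L := fun T =>
      funext fun i => by simp [applyTail, tailCount]
    simp [epsTuple, diffOp_one, hL]
  | succ ℓ ih =>
    rw [Fin.prod_univ_succ, map_mul, diffOp_mul, ih, diffOp_sum_right,
      sum_filter_forall_fin_cons fun j (t : Fin (α j) → Fin n) => StrictMono t, sum_comm]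
    refine sum_congr rfl fun T' _ => ?_
    rw [diffOp_smul_right, diffOp_esymm_DeltaZ, smul_sum]
    refine sum_congr rfl fun T₀ _ => ?_
    rw [epsTuple_cons, applyTail_cons_zero, mul_comm, mul_smul, eps_smul_DeltaZ]

open Classical in
theorem stmt9 (n ℓ : ℕ) (α : Fin ℓ → ℕ) (L : Fin n → ℤ × ℤ)
    (hinj : Function.Injective L) (hpos : ∀ i, 0 ≤ (L i).1 ∧ 0 ≤ (L i).2) :
    diffOp (rename Sum.inl (∏ j : Fin ℓ, esymm (Fin n) ℚ (α j))) (DeltaZ n L) =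
      ∑ T ∈ Finset.univ.filter
          (fun T : ∀ j : Fin ℓ, Fin (α j) → Fin n => ∀ j, StrictMono (T j)),
        epsTuple n α T L • DeltaZ n (applyTail n α T 0 L) :=
  stmt9_general n ℓ α L
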